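/- Let D ≥ 2 be squarefree, K = ℚ(√D), and let u ∈ ℤ_Kˣ be a unit with N(u) = −1. Let ℓ be an odd positive integer, set d := u^{2ℓ} + u^{−2ℓ} + 1 (a rational integer), and assume d ≥ 7 and d is odd. Put ∂ := 1 + u^ℓ + u^{−ℓ} ∈ ℤ_K, so that ∂·∂^τ = −d. If the multiplicative order of the image of u in (ℤ_K/dℤ_K)ˣ equals 6ℓ, then the multiplicative order of the image of u in (ℤ_K/∂ℤ_K)ˣ equals 3ℓ, and the multiplicative order of the image of u in (ℤ_K/∂^τℤ_K)ˣ equals 6ℓ. -/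

import Mathlib

open NumberField Polynomial

theorem conj_exists' {K : Type*} [Field K] [NumberField K]
    (hdeg : Module.finrank ℚ K = 2) (x : K)
    (hu : Algebra.norm ℚ x = -1) :
    ∃ σ : K ≃ₐ[ℚ] K, σ x = -x⁻¹ := by
  have hx0 : x ≠ 0 := by
    intro h
    rw [h, Algebra.norm_zero] at hu
    norm_num at hu
  have hnotQ : ∀ a : ℚ, x ≠ algebraMap ℚ K a := by
    intro a h
    rw [h, Algebra.norm_algebraMap, hdeg] at hu
    nlinarith [sq_nonneg a]
  have hLI : LinearIndependent ℚ ![(1 : K), x] := by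
    rw [linearIndependent_fin2]
    constructor
    · simpa using hx0
    · intro a h
      simp only [Matrix.cons_val_one, Matrix.head_cons, Matrix.cons_val_zero] at h
      have ha : a ≠ 0 := by rintro rfl; simp at h
      apply hnotQ a⁻¹
      rw [eq_comm, Algebra.algebraMap_eq_smul_one, inv_smul_eq_iff₀ ha, h]
  have hcard : Fintype.card (Fin 2) = Module.finrank ℚ K := by simp [hdeg]
  let bK : Module.Basis (Fin 2) ℚ K := basisOfLinearIndependentOfCardEqFinrank hLI hcard
  let pb : PowerBasis ℚ K :=
    { gen := x, dim := 2, basis := bK,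
      basis_eq_pow := by
        intro i
        have : (bK : Fin 2 → K) = ![(1 : K), x] :=
          coe_basisOfLinearIndependentOfCardEqFinrank hLI hcard
        fin_cases i <;> simp [this] }
  have hint : IsIntegral ℚ x := IsIntegral.of_finite ℚ x
  set p := minpoly ℚ x with hp
  have hpdeg : p.natDegree = 2 := pb.natDegree_minpoly
  have hmonic : p.Monic := minpoly.monic hint
  have hc0 : p.coeff 0 = -1 := by
    have := Algebra.PowerBasis.norm_gen_eq_coeff_zero_minpoly pb
    simp only [show pb.gen = x from rfl, hu, show pb.dim = 2 from rfl] at this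
    rw [← hp] at this
    linarith [this]
  have haev : Polynomial.aeval x p = 0 := minpoly.aeval ℚ x
  have hsum : ∀ z : K, Polynomial.aeval z p
      = p.coeff 0 • (1 : K) + p.coeff 1 • z + z ^ 2 := by
    intro z
    rw [Polynomial.aeval_eq_sum_range' (n := 3) (by omega) z]
    rw [Finset.sum_range_succ, Finset.sum_range_succ, Finset.sum_range_succ,
      Finset.sum_range_zero]
    have h2 : p.coeff 2 = 1 := by
      have := hmonic.coeff_natDegree
      rwa [hpdeg] at this
    rw [h2]
    simp
  have hxeq : (-1 : K) + algebraMap ℚ K (p.coeff 1) * x + x ^ 2 = 0 := by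
    have h := (hsum x).symm
    rw [haev, hc0] at h
    simp only [Algebra.smul_def, map_neg, map_one, mul_one] at h
    linear_combination h
  have hy : Polynomial.aeval (-x⁻¹) p = 0 := by
    rw [hsum, hc0]
    simp only [Algebra.smul_def, map_neg, map_one, mul_one]
    have hx2 : x ^ 2 ≠ 0 := pow_ne_zero 2 hx0
    simp only [eq_ratCast] at hxeq ⊢
    field_simp
    linear_combination (-1 : K) * hxeq
  let τ0 : K →ₐ[ℚ] K := pb.lift (-x⁻¹) hy
  have hinj : Function.Injective τ0 := τ0.toRingHom.injective
  have hsurj : Function.Surjective τ0 := by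
    have := (LinearMap.injective_iff_surjective (f := τ0.toLinearMap)).mp hinj
    exact this
  refine ⟨AlgEquiv.ofBijective τ0 ⟨hinj, hsurj⟩, ?_⟩
  show τ0 x = -x⁻¹
  exact pb.lift_gen (-x⁻¹) hy


lemma keynum' (ℓ a b : ℕ) (hℓodd : Odd ℓ) (hpos : 0 < ℓ)
    (hb6 : b ∣ 6 * ℓ) (hb3 : ¬ b ∣ 3 * ℓ)
    (ha : a = b / Nat.gcd b (3 * ℓ - 1))
    (hl : Nat.lcm a b = 6 * ℓ) : a = 3 * ℓ ∧ b = 6 * ℓ := by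
  have hb0 : b ≠ 0 := by
    rintro rfl
    have : 6 * ℓ = 0 := zero_dvd_iff.mp hb6
    omega
  have h2b : 2 ∣ b := by
    by_contra h2
    have hcop : Nat.Coprime b 2 := by
      rcases Nat.even_or_odd b with he | ho
      · exact absurd he.two_dvd h2
      · exact ho.coprime_two_right
    exact hb3 (hcop.dvd_of_dvd_mul_right (by rwa [show 3 * ℓ * 2 = 6 * ℓ by ring]))
  obtain ⟨b', rfl⟩ := h2b
  have hb' : b' ∣ 3 * ℓ := by
    have := hb6
    rw [show 6 * ℓ = 2 * (3 * ℓ) by ring] at this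
    exact (mul_dvd_mul_iff_left (two_ne_zero)).mp this
  have h3odd : Odd (3 * ℓ) := (Nat.odd_iff.mpr rfl).mul hℓodd
  have h3pos : 3 ≤ 3 * ℓ := by omega
  have h2div : 2 ∣ 3 * ℓ - 1 := by
    obtain ⟨m, hm⟩ := h3odd; omega
  have hcop1 : Nat.Coprime (3 * ℓ) (3 * ℓ - 1) := by
    have h := Nat.coprime_add_self_left (m := 1) (n := 3 * ℓ - 1)
    rw [show 1 + (3 * ℓ - 1) = 3 * ℓ by omega] at h
    exact h.mpr (Nat.coprime_one_left _)
  have hcopb' : Nat.Coprime b' (3 * ℓ - 1) := Nat.Coprime.coprime_dvd_left hb' hcop1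
  have hgcd : Nat.gcd (2 * b') (3 * ℓ - 1) = 2 := by
    rw [mul_comm, Nat.Coprime.gcd_mul_left_cancel 2 hcopb']
    exact Nat.gcd_eq_left h2div
  rw [hgcd] at ha
  have hb'0 : b' ≠ 0 := by omega
  have ha' : a = b' := by omega
  subst ha'
  have hlcm : Nat.lcm a (2 * a) = 2 * a :=
    Nat.dvd_antisymm (Nat.lcm_dvd ⟨2, by ring⟩ dvd_rfl) (Nat.dvd_lcm_right _ _)
  rw [hlcm] at hl
  omega

set_option synthInstance.maxHeartbeats 1000000 in
set_option maxHeartbeats 4000000 in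
theorem stmt_7 (D : ℕ) (hD : Squarefree D) (hD2 : 2 ≤ D)
    (K : Type*) [Field K] [NumberField K]
    (hdeg : Module.finrank ℚ K = 2)
    (sqrtD : K) (hsq : sqrtD ^ 2 = (D : K))
    (u : (𝓞 K)ˣ) (hu : Algebra.norm ℚ ((u : 𝓞 K) : K) = -1)
    (ℓ : ℕ) (hℓodd : Odd ℓ) (hℓpos : 0 < ℓ)
    (d : ℤ) (hd7 : 7 ≤ d) (hdodd : Odd d)
    (hd : ((d : ℤ) : 𝓞 K)
        = (u : 𝓞 K) ^ (2 * ℓ) + ((u⁻¹ : (𝓞 K)ˣ) : 𝓞 K) ^ (2 * ℓ) + 1)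
    (del : 𝓞 K) (hdel : del = 1 + (u : 𝓞 K) ^ ℓ + ((u⁻¹ : (𝓞 K)ˣ) : 𝓞 K) ^ ℓ)
    (h6 : orderOf (Units.map (Ideal.Quotient.mk (Ideal.span {((d : ℤ) : 𝓞 K)})).toMonoidHom u)
        = 6 * ℓ) :
    orderOf (Units.map (Ideal.Quotient.mk (Ideal.span {del})).toMonoidHom u) = 3 * ℓ ∧
    orderOf (Units.map (Ideal.Quotient.mk (Ideal.span {2 - del})).toMonoidHom u) = 6 * ℓ := by
  classical
  set uu : 𝓞 K := (u : 𝓞 K) with huu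
  set iv : 𝓞 K := ((u⁻¹ : (𝓞 K)ˣ) : 𝓞 K) with hiv
  have hmul : uu * iv = 1 := by
    rw [huu, hiv]
    exact_mod_cast u.mul_inv
  have hvw : uu ^ ℓ * iv ^ ℓ = 1 := by rw [← mul_pow, hmul, one_pow]
  set I : Ideal (𝓞 K) := Ideal.span {del} with hI
  set J : Ideal (𝓞 K) := Ideal.span {2 - del} with hJ
  set P : Ideal (𝓞 K) := Ideal.span {((d : ℤ) : 𝓞 K)} with hP
  -- d = -(del * (2 - del))
  have hd' : ((d : ℤ) : 𝓞 K) = -(del * (2 - del)) := by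
    rw [hd, hdel, show 2 * ℓ = ℓ * 2 by ring, pow_mul, pow_mul]
    linear_combination (-2 : 𝓞 K) * hvw
  -- u^(3ℓ) ≡ 1 mod I
  have hI3 : (Ideal.Quotient.mk I) (uu ^ (3 * ℓ)) = 1 := by
    have hmem : uu ^ (3 * ℓ) - 1 ∈ I := by
      rw [hI, Ideal.mem_span_singleton]
      refine ⟨(uu ^ ℓ - 1) * uu ^ ℓ, ?_⟩
      rw [hdel, show 3 * ℓ = ℓ * 3 by ring, pow_mul]
      linear_combination ((1 : 𝓞 K) - uu ^ ℓ) * hvw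
    have := Ideal.Quotient.eq_zero_iff_mem.mpr hmem
    rw [map_sub, map_one, sub_eq_zero] at this
    exact this
  -- u^(3ℓ) ≡ -1 mod J
  have hJ3 : (Ideal.Quotient.mk J) (uu ^ (3 * ℓ)) = -1 := by
    have hmem : uu ^ (3 * ℓ) + 1 ∈ J := by
      rw [hJ, Ideal.mem_span_singleton]
      refine ⟨-((uu ^ ℓ + 1) * uu ^ ℓ), ?_⟩
      rw [hdel, show 3 * ℓ = ℓ * 3 by ring, pow_mul]
      linear_combination (-(1 : 𝓞 K) - uu ^ ℓ) * hvw
    have := Ideal.Quotient.eq_zero_iff_mem.mpr hmem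
    rw [map_add, map_one] at this
    exact eq_neg_of_add_eq_zero_left this
  -- d ∈ I and d ∈ J
  have hdmemI : ((d : ℤ) : 𝓞 K) ∈ I := by
    rw [hI, Ideal.mem_span_singleton]
    exact ⟨-(2 - del), by rw [hd']; ring⟩
  have hdmemJ : ((d : ℤ) : 𝓞 K) ∈ J := by
    rw [hJ, Ideal.mem_span_singleton]
    exact ⟨-del, by rw [hd']; ring⟩
  obtain ⟨k, hk⟩ := hdodd
  have hone : ∀ Q : Ideal (𝓞 K), ((d : ℤ) : 𝓞 K) ∈ Q → (2 : 𝓞 K) ∈ Q → (1 : 𝓞 K) ∈ Q := by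
    intro Q hdQ h2Q
    have h1 : (1 : 𝓞 K) = ((d : ℤ) : 𝓞 K) - ((k : ℤ) : 𝓞 K) * 2 := by
      rw [hk]; push_cast; ring
    rw [h1]
    exact Q.sub_mem hdQ (Q.mul_mem_left _ h2Q)
  have hsup : I ⊔ J = ⊤ := by
    rw [Ideal.eq_top_iff_one]
    apply hone
    · exact Ideal.mem_sup_left hdmemI
    · have h2 : (2 : 𝓞 K) = del + (2 - del) := by ring
      rw [h2]
      exact Ideal.add_mem _ (Ideal.mem_sup_left (Ideal.mem_span_singleton_self del))
        (Ideal.mem_sup_right (Ideal.mem_span_singleton_self (2 - del)))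
  have hPIJ : P = I * J := by
    rw [hP, hI, hJ, Ideal.span_singleton_mul_span_singleton, hd',
      Ideal.span_singleton_neg]
  have hinfIJ : I ⊓ J = I * J := (Ideal.mul_eq_inf_of_coprime hsup).symm
  -- the conjugation
  obtain ⟨τ, hτ⟩ := conj_exists' hdeg ((uu : K)) hu
  set σ := galRestrict ℤ ℚ K (𝓞 K) τ with hσdef
  have hcomm : ∀ z : 𝓞 K, (algebraMap (𝓞 K) K) (σ z) = τ ((algebraMap (𝓞 K) K) z) :=
    fun z => algebraMap_galRestrict_apply ℤ τ z
  have hinjK : Function.Injective (algebraMap (𝓞 K) K) :=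
    NumberField.RingOfIntegers.coe_injective
  have hmulK : (algebraMap (𝓞 K) K) uu * (algebraMap (𝓞 K) K) iv = 1 := by
    rw [← map_mul, hmul, map_one]
  have hmulK' : (algebraMap (𝓞 K) K) iv * (algebraMap (𝓞 K) K) uu = 1 := by
    rw [mul_comm]
    exact hmulK
  have hxK : (algebraMap (𝓞 K) K) iv = ((algebraMap (𝓞 K) K) uu)⁻¹ :=
    eq_inv_of_mul_eq_one_left hmulK'
  have hσu : σ uu = -iv := by
    apply hinjK
    rw [map_neg, hcomm, hτ, hxK]
  have hivne : -iv ≠ 0 := by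
    intro h
    have : uu * iv = 0 := by rw [neg_eq_zero] at h; rw [h, mul_zero]
    rw [hmul] at this
    exact one_ne_zero this
  have hσiv : σ iv = -uu := by
    have h1 : σ uu * σ iv = 1 := by rw [← map_mul, hmul, map_one]
    rw [hσu] at h1
    have h2 : (-iv) * (-uu) = 1 := by rw [neg_mul_neg, mul_comm]; exact hmul
    exact mul_left_cancel₀ hivne (h1.trans h2.symm)
  have hσdel : σ del = 2 - del := by
    rw [hdel, map_add, map_add, map_one, map_pow, map_pow, hσu, hσiv,
      Odd.neg_pow hℓodd, Odd.neg_pow hℓodd]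
    ring
  have hmap : J = I.map (σ.toRingEquiv : 𝓞 K →+* 𝓞 K) := by
    have hco : (σ.toRingEquiv : 𝓞 K →+* 𝓞 K) del = 2 - del := hσdel
    rw [hI, hJ, Ideal.map_span, Set.image_singleton, hco]
  set ψ := Ideal.quotientEquiv I J σ.toRingEquiv hmap with hψdef
  have hψ : ∀ z : 𝓞 K, ψ ((Ideal.Quotient.mk I) z) = (Ideal.Quotient.mk J) (σ z) :=
    fun z => Ideal.quotientEquiv_mk I J σ.toRingEquiv hmap z
  -- the orders
  set a := orderOf ((Ideal.Quotient.mk I) uu) with hadef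
  set b := orderOf ((Ideal.Quotient.mk J) uu) with hbdef
  have h6' : orderOf ((Ideal.Quotient.mk P) uu) = 6 * ℓ := by
    rw [← h6]
    have hcoe : ((Units.map (Ideal.Quotient.mk P).toMonoidHom u :
        ((𝓞 K ⧸ P))ˣ) : (𝓞 K ⧸ P)) = (Ideal.Quotient.mk P) uu := rfl
    rw [← orderOf_units (y := Units.map (Ideal.Quotient.mk P).toMonoidHom u), hcoe]
  have ha3 : a ∣ 3 * ℓ := by
    apply orderOf_dvd_of_pow_eq_one
    rw [← map_pow]
    exact hI3
  have ha6 : a ∣ 6 * ℓ := ha3.trans ⟨2, by ring⟩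
  have hb6 : b ∣ 6 * ℓ := by
    apply orderOf_dvd_of_pow_eq_one
    rw [show 6 * ℓ = 3 * ℓ * 2 by ring, pow_mul, ← map_pow, hJ3, neg_one_sq]
  have hlcm : Nat.lcm a b = 6 * ℓ := by
    apply Nat.dvd_antisymm (Nat.lcm_dvd ha6 hb6)
    rw [← h6']
    apply orderOf_dvd_of_pow_eq_one
    have hmemI : uu ^ (Nat.lcm a b) - 1 ∈ I := by
      have h1 : ((Ideal.Quotient.mk I) uu) ^ Nat.lcm a b = 1 :=
        orderOf_dvd_iff_pow_eq_one.mp (Nat.dvd_lcm_left a b)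
      rw [← map_pow] at h1
      apply Ideal.Quotient.eq_zero_iff_mem.mp
      rw [map_sub, map_one, h1, sub_self]
    have hmemJ : uu ^ (Nat.lcm a b) - 1 ∈ J := by
      have h1 : ((Ideal.Quotient.mk J) uu) ^ Nat.lcm a b = 1 :=
        orderOf_dvd_iff_pow_eq_one.mp (Nat.dvd_lcm_right a b)
      rw [← map_pow] at h1
      apply Ideal.Quotient.eq_zero_iff_mem.mp
      rw [map_sub, map_one, h1, sub_self]
    have hmemP : uu ^ (Nat.lcm a b) - 1 ∈ P := by
      rw [hPIJ, ← hinfIJ]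
      exact ⟨hmemI, hmemJ⟩
    have h0 := Ideal.Quotient.eq_zero_iff_mem.mpr hmemP
    rw [map_sub, map_one, sub_eq_zero, map_pow] at h0
    exact h0
  have hJtop : J ≠ ⊤ := by
    intro htop
    have hsub : Subsingleton (𝓞 K ⧸ J) := Ideal.Quotient.subsingleton_iff.mpr htop
    have hb1 : b = 1 := orderOf_eq_one_iff.mpr (Subsingleton.elim _ _)
    have ha1 : a = 1 := by
      apply orderOf_eq_one_iff.mpr
      apply ψ.injective
      rw [map_one]
      exact Subsingleton.elim _ _
    rw [ha1, hb1] at hlcm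
    simp at hlcm
    omega
  have hneg : (Ideal.Quotient.mk J) (-1 : 𝓞 K) ≠ 1 := by
    intro h
    apply hJtop
    rw [Ideal.eq_top_iff_one]
    apply hone J hdmemJ
    apply Ideal.Quotient.eq_zero_iff_mem.mp
    have h2 : (2 : 𝓞 K) = -(-1 - 1) := by ring
    have h3 : (Ideal.Quotient.mk J) ((-1 : 𝓞 K) - 1) = 0 := by
      rw [map_sub, h, map_one, sub_self]
    rw [h2, map_neg, h3, neg_zero]
  have hb3 : ¬ b ∣ 3 * ℓ := by
    intro hdvd
    have h1 : ((Ideal.Quotient.mk J) uu) ^ (3 * ℓ) = 1 :=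
      orderOf_dvd_iff_pow_eq_one.mp hdvd
    rw [← map_pow, hJ3] at h1
    exact hneg (by rw [map_neg, map_one]; exact h1)
  -- the key relation : a = orderOf (mk J uu ^ (3ℓ - 1))
  have hrel0 : a = orderOf ((Ideal.Quotient.mk J) (-iv)) := by
    rw [hadef, ← orderOf_injective ψ.toRingHom.toMonoidHom
      (fun x y hxy => ψ.injective hxy) ((Ideal.Quotient.mk I) uu)]
    have : ψ.toRingHom.toMonoidHom ((Ideal.Quotient.mk I) uu)
        = (Ideal.Quotient.mk J) (σ uu) := hψ uu
    rw [this, hσu]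
  have hpowrel : ((Ideal.Quotient.mk J) uu) ^ (3 * ℓ - 1)
      = (Ideal.Quotient.mk J) (-iv) := by
    have e1 : ((Ideal.Quotient.mk J) uu) * ((Ideal.Quotient.mk J) iv) = 1 := by
      rw [← map_mul, hmul, map_one]
    have e2 : ((Ideal.Quotient.mk J) uu) ^ (3 * ℓ) = -1 := by
      rw [← map_pow]; exact hJ3
    calc ((Ideal.Quotient.mk J) uu) ^ (3 * ℓ - 1)
        = ((Ideal.Quotient.mk J) uu) ^ (3 * ℓ - 1)
          * (((Ideal.Quotient.mk J) uu) * ((Ideal.Quotient.mk J) iv)) := by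
          rw [e1, mul_one]
      _ = ((Ideal.Quotient.mk J) uu) ^ (3 * ℓ - 1 + 1)
          * ((Ideal.Quotient.mk J) iv) := by
          rw [← mul_assoc, ← pow_succ]
      _ = -((Ideal.Quotient.mk J) iv) := by
          rw [show 3 * ℓ - 1 + 1 = 3 * ℓ by omega, e2, neg_one_mul]
      _ = (Ideal.Quotient.mk J) (-iv) := (map_neg _ _).symm
  have hrel : a = b / Nat.gcd b (3 * ℓ - 1) := by
    rw [hrel0, ← hpowrel, orderOf_pow' _ (show 3 * ℓ - 1 ≠ 0 by omega), hbdef]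
  -- conclude
  obtain ⟨haf, hbf⟩ := keynum' ℓ a b hℓodd hℓpos hb6 hb3 hrel hlcm
  constructor
  · rw [← haf]
    have hcoe : ((Units.map (Ideal.Quotient.mk I).toMonoidHom u :
        ((𝓞 K ⧸ I))ˣ) : (𝓞 K ⧸ I)) = (Ideal.Quotient.mk I) uu := rfl
    rw [← orderOf_units (y := Units.map (Ideal.Quotient.mk I).toMonoidHom u), hcoe]
  · rw [← hbf]
    have hcoe : ((Units.map (Ideal.Quotient.mk J).toMonoidHom u :
        ((𝓞 K ⧸ J))ˣ) : (𝓞 K ⧸ J)) = (Ideal.Quotient.mk J) uu := rfl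
    rw [← orderOf_units (y := Units.map (Ideal.Quotient.mk J).toMonoidHom u), hcoe]
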